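/- Parallel evolution commutes over Flip-Join equivalence steps: if D (FJ)* D' and D' ⇒_P E', then there exists E with D ⇒_P E and E (FJ)* E'. That is, ⇒_P ⊣ (FJ)*. -/
import Mathlib


open Relation
open scoped NNReal

abbrev PDist (A : Type) := List (ℝ≥0 × A)

namespace PPARS

variable {A X : Type}

/-- Total weight of a list distribution. -/
def weight (D : PDist A) : ℝ≥0 := (D.map Prod.fst).sum

/-- Scale every weight of a distribution by `α`. -/
def scale (α : ℝ≥0) (D : PDist A) : PDist A := D.map (fun pa => (α * pa.1, pa.2))

open Classical in
/-- Total weight that `D` assigns to the element `a`. -/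
noncomputable def wt (D : PDist A) (a : A) : ℝ≥0 :=
  (D.map (fun pa => if pa.2 = a then pa.1 else 0)).sum

/-- The Flip rule, closed under list contexts. -/
inductive FlipS : PDist A → PDist A → Prop
  | mk (E₁ E₂ : PDist A) (p q : ℝ≥0) (a b : A) :
      FlipS (E₁ ++ [(p,a),(q,b)] ++ E₂) (E₁ ++ [(q,b),(p,a)] ++ E₂)

/-- The Join rule, closed under list contexts. -/
inductive JoinS : PDist A → PDist A → Prop
  | mk (E₁ E₂ : PDist A) (p q : ℝ≥0) (a : A) :
      JoinS (E₁ ++ [(p,a),(q,a)] ++ E₂) (E₁ ++ [(p+q,a)] ++ E₂)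

/-- The Split rule, closed under list contexts. -/
inductive SplitS : PDist A → PDist A → Prop
  | mk (E₁ E₂ : PDist A) (p q : ℝ≥0) (a : A) :
      SplitS (E₁ ++ [(p+q,a)] ++ E₂) (E₁ ++ [(p,a),(q,a)] ++ E₂)

/-- One `∼`-step: congruence closure of Flip, Join and Split. -/
def SimStep (D E : PDist A) : Prop := FlipS D E ∨ JoinS D E ∨ SplitS D E

/-- One Flip-or-Join step. -/
def FJ (D E : PDist A) : Prop := FlipS D E ∨ JoinS D E

/-- Distribution equivalence `≈`. -/
def DEquiv : PDist A → PDist A → Prop := ReflTransGen SimStep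

/-- Parallel evolution `⇒_P` for a PARS relation `R`. -/
inductive PEvol (R : A → PDist A → Prop) : PDist A → PDist A → Prop
  | nil : PEvol R [] []
  | keep {ds ds' : PDist A} (p : ℝ≥0) (a : A) :
      PEvol R ds ds' → PEvol R ((p,a) :: ds) ((p,a) :: ds')
  | evolve {a : A} {D ds ds' : PDist A} (p : ℝ≥0) :
      R a D → PEvol R ds ds' → PEvol R ((p,a) :: ds) (scale p D ++ ds')

/-- Proper parallel evolution `⇒_P¹`: at least one element evolves. -/
inductive PEvol1 (R : A → PDist A → Prop) : PDist A → PDist A → Prop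
  | evolve {a : A} {D ds ds' : PDist A} (p : ℝ≥0) :
      R a D → PEvol R ds ds' → PEvol1 R ((p,a) :: ds) (scale p D ++ ds')
  | keep {ds ds' : PDist A} (p : ℝ≥0) (a : A) :
      PEvol1 R ds ds' → PEvol1 R ((p,a) :: ds) ((p,a) :: ds')

/-- The determinisation relation `↠ = ⇒_P ∪ ≈`. -/
def Red (R : A → PDist A → Prop) (D E : PDist A) : Prop := PEvol R D E ∨ DEquiv D E

/-- `R` defines a PARS: successor distributions are normalised. -/
def IsPARS (R : A → PDist A → Prop) : Prop := ∀ a D, R a D → weight D = 1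

/-- A terminal element has no successor distribution. -/
def Terminal (R : A → PDist A → Prop) (a : A) : Prop := ∀ D, ¬ R a D

/-- A terminal distribution contains only terminal elements. -/
def TerminalD (R : A → PDist A → Prop) (D : PDist A) : Prop := ∀ pa ∈ D, Terminal R pa.2

/-- Classical confluence of a relation. -/
def Confluent (r : X → X → Prop) : Prop :=
  ∀ a b c, ReflTransGen r a b → ReflTransGen r a c →
    ∃ d, ReflTransGen r b d ∧ ReflTransGen r c d

/-- Raw (finite) computation trees. -/
inductive CTree (A : Type) where
  | leaf (a : A)
  | node (a : A) (cs : List (ℝ≥0 × CTree A))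

def CTree.root : CTree A → A
  | .leaf a => a
  | .node a _ => a

/-- `IsTree R t a`: `t` is a computation tree of the PARS `R` with root `a`. -/
inductive IsTree (R : A → PDist A → Prop) : CTree A → A → Prop
  | leaf (a : A) : IsTree R (.leaf a) a
  | node (a : A) (cs : List (ℝ≥0 × CTree A)) :
      R a (cs.map fun x => (x.1, x.2.root)) →
      (∀ x ∈ cs, IsTree R x.2 x.2.root) →
      IsTree R (.node a cs) a

mutual
/-- Support of a computation tree. -/
def supp : CTree A → PDist A
  | .leaf a => [(1, a)]
  | .node _ cs => suppL cs
def suppL : List (ℝ≥0 × CTree A) → PDist A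
  | [] => []
  | (p, t) :: ts => scale p (supp t) ++ suppL ts
end

/-- A tree is maximal when all its leaves are terminal elements. -/
inductive MaximalT (R : A → PDist A → Prop) : CTree A → Prop
  | leaf (a : A) : Terminal R a → MaximalT R (.leaf a)
  | node (a : A) (cs : List (ℝ≥0 × CTree A)) :
      (∀ x ∈ cs, MaximalT R x.2) → MaximalT R (.node a cs)

end PPARS


section Aux
open PPARS Relation
variable {A : Type} {R : A → PDist A → Prop}

lemma fj_ctx {X Y : PDist A} (C F : PDist A) (h : FJ X Y) :
    FJ (C ++ X ++ F) (C ++ Y ++ F) := by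
  rcases h with ⟨E₁, E₂, p, q, a, b⟩ | ⟨E₁, E₂, p, q, a⟩
  · exact Or.inl (by simpa [List.append_assoc] using FlipS.mk (C ++ E₁) (E₂ ++ F) p q a b)
  · exact Or.inr (by simpa [List.append_assoc] using JoinS.mk (C ++ E₁) (E₂ ++ F) p q a)

lemma fjs_ctx {X Y : PDist A} (C F : PDist A) (h : ReflTransGen FJ X Y) :
    ReflTransGen FJ (C ++ X ++ F) (C ++ Y ++ F) := by
  induction h with
  | refl => exact ReflTransGen.refl
  | tail _ h ih => exact ih.tail (fj_ctx C F h)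

lemma flip_front (X : PDist A) (z : ℝ≥0 × A) :
    ReflTransGen FJ (X ++ [z]) (z :: X) := by
  induction X with
  | nil => exact ReflTransGen.refl
  | cons x xs ih =>
    have h1 : ReflTransGen FJ (x :: (xs ++ [z])) (x :: z :: xs) := by
      simpa using fjs_ctx [x] [] ih
    have h2 : FJ (x :: z :: xs) (z :: x :: xs) := by
      exact Or.inl (by simpa using FlipS.mk [] xs x.1 z.1 x.2 z.2)
    have h1' : ReflTransGen FJ ((x :: xs) ++ [z]) (x :: z :: xs) := by simpa using h1
    exact h1'.tail h2

lemma block_swap (X Y : PDist A) : ReflTransGen FJ (X ++ Y) (Y ++ X) := by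
  induction Y generalizing X with
  | nil => simpa using (ReflTransGen.refl : ReflTransGen FJ X X)
  | cons y Y ih =>
    have h1 : ReflTransGen FJ (X ++ y :: Y) ((y :: X) ++ Y) := by
      simpa [List.append_assoc] using fjs_ctx [] Y (flip_front X y)
    have h2 : ReflTransGen FJ (y :: (X ++ Y)) (y :: (Y ++ X)) := by
      simpa using fjs_ctx [y] [] (ih X)
    exact h1.trans (by simpa using h2)

lemma block_swap_ctx (C F X Y : PDist A) :
    ReflTransGen FJ (C ++ X ++ Y ++ F) (C ++ Y ++ X ++ F) := by
  have := fjs_ctx C F (block_swap X Y)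
  simpa [List.append_assoc] using this

lemma join_scale (Da : PDist A) (p q : ℝ≥0) (C F : PDist A) :
    ReflTransGen FJ (C ++ scale p Da ++ scale q Da ++ F)
      (C ++ scale (p + q) Da ++ F) := by
  induction Da generalizing C with
  | nil => simpa [scale] using (ReflTransGen.refl : ReflTransGen FJ (C ++ F) (C ++ F))
  | cons rx Da ih =>
    obtain ⟨r, x⟩ := rx
    have h1 : ReflTransGen FJ (C ++ scale p ((r, x) :: Da) ++ scale q ((r, x) :: Da) ++ F)
        ((C ++ [(p * r, x), (q * r, x)]) ++ scale p Da ++ scale q Da ++ F) := by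
      have := block_swap_ctx (C ++ [(p * r, x)]) (scale q Da ++ F) (scale p Da) [(q * r, x)]
      simpa [scale, List.append_assoc] using this
    have h2 : FJ ((C ++ [(p * r, x), (q * r, x)]) ++ scale p Da ++ scale q Da ++ F)
        ((C ++ [((p + q) * r, x)]) ++ scale p Da ++ scale q Da ++ F) := by
      have := JoinS.mk C (scale p Da ++ scale q Da ++ F) (p * r) (q * r) x
      exact Or.inr (by simpa [List.append_assoc, add_mul] using this)
    have h3 := ih (C ++ [((p + q) * r, x)])
    exact (h1.tail h2).trans (by simpa [scale, List.append_assoc] using h3)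

lemma pevol_append {L₁ L₂ E₁ E₂ : PDist A} (h1 : PEvol R L₁ E₁) (h2 : PEvol R L₂ E₂) :
    PEvol R (L₁ ++ L₂) (E₁ ++ E₂) := by
  induction h1 with
  | nil => simpa using h2
  | keep p a _ ih => exact PEvol.keep p a ih
  | evolve p hr _ ih => simpa [List.append_assoc] using PEvol.evolve p hr ih

lemma pevol_split {L₁ L₂ E : PDist A} (h : PEvol R (L₁ ++ L₂) E) :
    ∃ E₁ E₂, E = E₁ ++ E₂ ∧ PEvol R L₁ E₁ ∧ PEvol R L₂ E₂ := by
  induction L₁ generalizing E with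
  | nil => exact ⟨[], E, rfl, PEvol.nil, h⟩
  | cons x L₁ ih =>
    cases h with
    | keep p a h =>
      obtain ⟨E₁, E₂, rfl, hp1, hp2⟩ := ih h
      exact ⟨(p, a) :: E₁, E₂, rfl, PEvol.keep p a hp1, hp2⟩
    | evolve p hr h =>
      obtain ⟨E₁, E₂, rfl, hp1, hp2⟩ := ih h
      exact ⟨_ ++ E₁, E₂, by simp [List.append_assoc], PEvol.evolve p hr hp1, hp2⟩

lemma pevol_single {p : ℝ≥0} {a : A} {X : PDist A} (h : PEvol R [(p, a)] X) :
    X = [(p, a)] ∨ ∃ D, R a D ∧ X = scale p D := by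
  cases h with
  | keep p a h => cases h; exact Or.inl rfl
  | evolve p hr h => cases h; exact Or.inr ⟨_, hr, by simp⟩

lemma comm_step {D D' E' : PDist A} (hFJ : FJ D D') (h₂ : PEvol R D' E') :
    ∃ E, PEvol R D E ∧ ReflTransGen FJ E E' := by
  rcases hFJ with ⟨E₁, E₂, p, q, a, b⟩ | ⟨E₁, E₂, p, q, a⟩
  · -- Flip
    obtain ⟨M, F₂, rfl, hM, hF₂⟩ := pevol_split h₂
    obtain ⟨F₁, M₁, rfl, hF₁, hM₁⟩ := pevol_split (L₁ := E₁) hM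
    obtain ⟨Xb, Xa, rfl, hXb, hXa⟩ := pevol_split (L₁ := [(q, b)]) (L₂ := [(p, a)]) hM₁
    refine ⟨F₁ ++ (Xa ++ Xb) ++ F₂, ?_, ?_⟩
    · have := pevol_append hF₁ (pevol_append (pevol_append hXa hXb) hF₂)
      simpa [List.append_assoc] using this
    · simpa [List.append_assoc] using block_swap_ctx F₁ F₂ Xa Xb
  · -- Join
    obtain ⟨M, F₂, rfl, hM, hF₂⟩ := pevol_split h₂
    obtain ⟨F₁, M₁, rfl, hF₁, hM₁⟩ := pevol_split (L₁ := E₁) hM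
    rcases pevol_single hM₁ with rfl | ⟨Da, hDa, rfl⟩
    · refine ⟨F₁ ++ [(p, a), (q, a)] ++ F₂, ?_, ?_⟩
      · have : PEvol R ([(p, a), (q, a)] : PDist A) [(p, a), (q, a)] :=
          PEvol.keep p a (PEvol.keep q a PEvol.nil)
        simpa [List.append_assoc] using pevol_append hF₁ (pevol_append this hF₂)
      · exact ReflTransGen.single (Or.inr (JoinS.mk F₁ F₂ p q a))
    · refine ⟨F₁ ++ (scale p Da ++ scale q Da) ++ F₂, ?_, ?_⟩
      · have h1 : PEvol R ([(p, a), (q, a)] : PDist A) (scale p Da ++ scale q Da) := by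
          simpa using PEvol.evolve (R := R) (ds := [(q, a)]) p hDa
            (by simpa using PEvol.evolve (R := R) (ds := ([] : PDist A)) q hDa PEvol.nil)
        simpa [List.append_assoc] using pevol_append hF₁ (pevol_append h1 hF₂)
      · simpa [List.append_assoc] using join_scale Da p q F₁ F₂

end Aux

open PPARS Relation in
/-- Parallel evolution commutes over Flip-Join steps: `⇒_P ⊣ (FJ)*`. -/
theorem pevol_comm_fj {A : Type} (R : A → PDist A → Prop) (hR : IsPARS R)
    {D D' E' : PDist A} (h₁ : ReflTransGen FJ D D') (h₂ : PEvol R D' E') :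
    ∃ E, PEvol R D E ∧ ReflTransGen FJ E E' := by
  induction h₁ using ReflTransGen.head_induction_on with
  | refl => exact ⟨E', h₂, ReflTransGen.refl⟩
  | head h _ ih =>
    obtain ⟨E₁, hE₁, hfj₁⟩ := ih
    obtain ⟨E, hE, hfj⟩ := comm_step h hE₁
    exact ⟨E, hE, hfj.trans hfj₁⟩
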